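/- Suppose A ∈ ℝ^{m×N} satisfies the ℓ_ω^2-BRNSP of order s ≥ ‖ω‖_∞² with constants 0 < ρ < 1 and τ > 0. Let x ∈ ℝ^N, y = Ax + e with ‖e‖₂ ≤ η, and let x̂ minimize ‖z‖_{2,1}^{(ω)} subject to ‖Az − y‖₂ ≤ η. Then ‖x − x̂‖_{2,1}^{(ω)} ≤ 2C_ρ σ_s(x)_{2,1}^{(ω)} + 2D_{ρ,τ}√s η and ‖x − x̂‖₂ ≤ 2C_ρ σ_s(x)_{2,1}^{(ω)}/√s + 2D_{ρ,τ} η, with C_ρ = (1+ρ)²/(1−ρ) and D_{ρ,τ} = τ(3+ρ)/(1−ρ). -/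

import Mathlib

open Finset

noncomputable def l2 {n : Type*} [Fintype n] (v : n → ℝ) : ℝ := Real.sqrt (∑ i, (v i) ^ 2)

variable {B : ℕ} {d : Fin B → ℕ}

/-- ℓ² norm of the block `b` of the block vector `x`. -/
noncomputable def bn (x : ((b : Fin B) × Fin (d b)) → ℝ) (b : Fin B) : ℝ :=
  Real.sqrt (∑ i : Fin (d b), (x ⟨b, i⟩) ^ 2)

/-- Weighted block ℓ¹ norm `‖x‖_{2,1}^{(ω)}`. -/
noncomputable def n21 (ω : Fin B → ℝ) (x : ((b : Fin B) × Fin (d b)) → ℝ) : ℝ :=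
  ∑ b, ω b * bn x b

/-- Weighted block (2,p) norm `‖x‖_{2,p}^{(ω)}` (real exponents). -/
noncomputable def n2p (ω : Fin B → ℝ) (p : ℝ) (x : ((b : Fin B) × Fin (d b)) → ℝ) : ℝ :=
  (∑ b, ω b ^ (2 - p) * bn x b ^ p) ^ (1 / p)

/-- Restriction of `x` to the blocks in `S` (zero outside). -/
def rs (S : Finset (Fin B)) (x : ((b : Fin B) × Fin (d b)) → ℝ) :
    ((b : Fin B) × Fin (d b)) → ℝ :=
  fun j => if j.1 ∈ S then x j else 0

/-- Weighted cardinality `ω(S) = ∑_{b∈S} ω_b²`. -/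
def wCard (ω : Fin B → ℝ) (S : Finset (Fin B)) : ℝ := ∑ b ∈ S, ω b ^ 2

/-- Weighted block sparsity `‖x‖₀^{(ω)}`. -/
noncomputable def wspar (ω : Fin B → ℝ) (x : ((b : Fin B) × Fin (d b)) → ℝ) : ℝ :=
  ∑ b, if bn x b = 0 then 0 else ω b ^ 2

/-- Best weighted `s`-block approximation error in the `‖·‖_{2,1}^{(ω)}` norm. -/
noncomputable def sigmaS (ω : Fin B → ℝ) (s : ℝ) (x : ((b : Fin B) × Fin (d b)) → ℝ) : ℝ :=
  sInf {t | ∃ z, wspar ω z ≤ s ∧ t = n21 ω (x - z)}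

/-- Weighted block restricted isometry property of order `t` with constant `δ`. -/
noncomputable def WBRIP {m : ℕ} (A : Matrix (Fin m) ((b : Fin B) × Fin (d b)) ℝ)
    (ω : Fin B → ℝ) (t δ : ℝ) : Prop :=
  ∀ x : ((b : Fin B) × Fin (d b)) → ℝ, wspar ω x ≤ t →
    (1 - δ) * l2 x ^ 2 ≤ l2 (A.mulVec x) ^ 2 ∧ l2 (A.mulVec x) ^ 2 ≤ (1 + δ) * l2 x ^ 2

/-!
Write `v = x - x̂`. Cauchy–Schwarz on a block set of weight `ω(S) ≤ s` turns the `ℓ²` robust null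
space property into the `ℓ¹` one with `τ` replaced by `τ √s`. Since `x̂` minimises the block norm,
`v` obeys the cone constraint `‖v[Sᶜ]‖ ≤ ‖v[S]‖ + 2 ‖x[Sᶜ]‖` on the support `S` of any `s`-sparse
`z`, whence `(1 - ρ) ‖v‖_{2,1} ≤ 2 (1 + ρ) σ_s(x) + 4 τ √s η`. For the `ℓ²` bound, split `v` at the
blocks with `ω_b ‖v‖_{2,1} < s ‖v_b‖₂`: they have weight at most `s`, so the null space property
controls `v` there, and off them `‖v‖₂ ≤ ‖v‖_{2,1} / √s`.
-/

section L2

variable {n : Type*} [Fintype n]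

lemma l2_eq_norm (v : n → ℝ) : l2 v = ‖(WithLp.toLp 2 v : EuclideanSpace ℝ n)‖ := by
  simp [l2, EuclideanSpace.norm_eq]

lemma l2_nonneg (v : n → ℝ) : 0 ≤ l2 v := Real.sqrt_nonneg _

lemma l2_add_le (u w : n → ℝ) : l2 (u + w) ≤ l2 u + l2 w := by
  simpa only [l2_eq_norm, WithLp.toLp_add] using norm_add_le _ _

lemma l2_neg (v : n → ℝ) : l2 (-v) = l2 v := by
  simp [l2]

lemma l2_sq (v : n → ℝ) : l2 v ^ 2 = ∑ i, v i ^ 2 :=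
  Real.sq_sqrt (sum_nonneg fun _ _ => sq_nonneg _)

lemma l2_mulVec_sub_le_two_mul {m : ℕ} (A : Matrix (Fin m) n ℝ) {x xh : n → ℝ} {e : Fin m → ℝ}
    {η : ℝ} (he : l2 e ≤ η) (hfeas : l2 (A.mulVec xh - (A.mulVec x + e)) ≤ η) :
    l2 (A.mulVec (x - xh)) ≤ 2 * η := by
  have hsplit : A.mulVec (x - xh) = -(A.mulVec xh - (A.mulVec x + e)) + -e := by
    rw [Matrix.mulVec_sub]; abel
  have := l2_add_le (-(A.mulVec xh - (A.mulVec x + e))) (-e)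
  rw [l2_neg, l2_neg, ← hsplit] at this
  linarith

end L2

/-- Weighted Stechkin estimate; the witness is `S = {i | ω i * N < s * a i}`, `N = ∑ ω i * a i`. -/
lemma exists_sum_sq_le_and_mul_sum_sq_compl_le {ι : Type*} [Fintype ι] [DecidableEq ι]
    {ω a : ι → ℝ} (hω : ∀ i, 0 < ω i) (ha : ∀ i, 0 ≤ a i) {s : ℝ} (hs : 0 ≤ s) :
    ∃ S : Finset ι, ∑ i ∈ S, ω i ^ 2 ≤ s ∧ s * ∑ i ∈ Sᶜ, a i ^ 2 ≤ (∑ i, ω i * a i) ^ 2 := by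
  set N := ∑ i, ω i * a i
  have hterm : ∀ i ∈ (univ : Finset ι), 0 ≤ ω i * a i := fun i _ => mul_nonneg (hω i).le (ha i)
  rcases (sum_nonneg hterm).eq_or_lt with hN | hN
  · have ha0 : ∀ i, a i = 0 := fun i =>
      ((mul_eq_zero.mp ((sum_eq_zero_iff_of_nonneg hterm).mp hN.symm i (mem_univ i))).resolve_left
        (hω i).ne')
    exact ⟨∅, by simpa using hs, by simp [ha0]; positivity⟩
  set S := univ.filter fun i => ω i * N < s * a i
  refine ⟨S, ?_, ?_⟩
  · refine le_of_mul_le_mul_left ?_ hN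
    calc N * ∑ i ∈ S, ω i ^ 2 ≤ ∑ i ∈ S, s * (ω i * a i) := by
          rw [mul_sum]
          refine sum_le_sum fun i hi => ?_
          have := (mem_filter.mp hi).2
          nlinarith [hω i]
      _ ≤ s * N := by
          rw [← mul_sum]
          exact mul_le_mul_of_nonneg_left (sum_le_sum_of_subset_of_nonneg (subset_univ _)
            fun i _ _ => hterm i (mem_univ i)) hs
      _ = N * s := mul_comm _ _
  · calc s * ∑ i ∈ Sᶜ, a i ^ 2 ≤ ∑ i ∈ Sᶜ, N * (ω i * a i) := by
          rw [mul_sum]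
          refine sum_le_sum fun i hi => ?_
          have : s * a i ≤ ω i * N := by simpa [S] using hi
          nlinarith [ha i]
      _ ≤ N * N := by
          rw [← mul_sum]
          exact mul_le_mul_of_nonneg_left (sum_le_sum_of_subset_of_nonneg (subset_univ _)
            fun i _ _ => hterm i (mem_univ i)) hN.le
      _ = N ^ 2 := (sq N).symm

section Blocks

variable {ω : Fin B → ℝ}

lemma bn_nonneg (x : ((b : Fin B) × Fin (d b)) → ℝ) (b : Fin B) : 0 ≤ bn x b :=
  Real.sqrt_nonneg _

lemma bn_add_le (u w : ((b : Fin B) × Fin (d b)) → ℝ) (b : Fin B) :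
    bn (u + w) b ≤ bn u b + bn w b :=
  l2_add_le (fun i => u ⟨b, i⟩) (fun i => w ⟨b, i⟩)

lemma bn_neg (u : ((b : Fin B) × Fin (d b)) → ℝ) (b : Fin B) : bn (-u) b = bn u b := by
  simp [bn]

lemma bn_rs (S : Finset (Fin B)) (x : ((b : Fin B) × Fin (d b)) → ℝ) (b : Fin B) :
    bn (rs S x) b = if b ∈ S then bn x b else 0 := by
  by_cases hb : b ∈ S <;> simp [bn, rs, hb]

lemma rs_add_rs_compl (S : Finset (Fin B)) (x : ((b : Fin B) × Fin (d b)) → ℝ) :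
    rs S x + rs Sᶜ x = x := by
  funext j
  by_cases h : j.1 ∈ S <;> simp [rs, h]

lemma rs_sub (S : Finset (Fin B)) (u w : ((b : Fin B) × Fin (d b)) → ℝ) :
    rs S (u - w) = rs S u - rs S w := by
  funext j
  by_cases h : j.1 ∈ S <;> simp [rs, h]

lemma l2_sq_eq_sum_bn_sq (v : ((b : Fin B) × Fin (d b)) → ℝ) :
    l2 v ^ 2 = ∑ b, bn v b ^ 2 := by
  rw [l2_sq, Fintype.sum_sigma]
  exact sum_congr rfl fun b _ => (Real.sq_sqrt (sum_nonneg fun _ _ => sq_nonneg _)).symm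

lemma l2_rs_sq (S : Finset (Fin B)) (v : ((b : Fin B) × Fin (d b)) → ℝ) :
    l2 (rs S v) ^ 2 = ∑ b ∈ S, bn v b ^ 2 := by
  simp only [l2_sq_eq_sum_bn_sq, bn_rs, ite_pow, ne_eq, OfNat.ofNat_ne_zero, not_false_eq_true,
    zero_pow]
  rw [sum_ite_mem, univ_inter]

lemma l2_le_l2_rs_add_l2_rs_compl (S : Finset (Fin B)) (v : ((b : Fin B) × Fin (d b)) → ℝ) :
    l2 v ≤ l2 (rs S v) + l2 (rs Sᶜ v) := by
  simpa only [rs_add_rs_compl] using l2_add_le (rs S v) (rs Sᶜ v)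

lemma n21_nonneg (hω : ∀ b, 0 ≤ ω b) (x : ((b : Fin B) × Fin (d b)) → ℝ) : 0 ≤ n21 ω x :=
  sum_nonneg fun b _ => mul_nonneg (hω b) (bn_nonneg x b)

lemma n21_add_le (hω : ∀ b, 0 ≤ ω b) (u w : ((b : Fin B) × Fin (d b)) → ℝ) :
    n21 ω (u + w) ≤ n21 ω u + n21 ω w := by
  simp only [n21, ← sum_add_distrib, ← mul_add]
  exact sum_le_sum fun b _ => mul_le_mul_of_nonneg_left (bn_add_le u w b) (hω b)

lemma n21_neg (u : ((b : Fin B) × Fin (d b)) → ℝ) : n21 ω (-u) = n21 ω u := by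
  simp only [n21, bn_neg]

lemma n21_rs (S : Finset (Fin B)) (v : ((b : Fin B) × Fin (d b)) → ℝ) :
    n21 ω (rs S v) = ∑ b ∈ S, ω b * bn v b := by
  simp only [n21, bn_rs, mul_ite, mul_zero]
  rw [sum_ite_mem, univ_inter]

lemma n21_eq_n21_rs_add_n21_rs_compl (S : Finset (Fin B)) (x : ((b : Fin B) × Fin (d b)) → ℝ) :
    n21 ω x = n21 ω (rs S x) + n21 ω (rs Sᶜ x) := by
  rw [n21_rs, n21_rs, sum_add_sum_compl]
  rfl

lemma n21_rs_le (hω : ∀ b, 0 ≤ ω b) (S : Finset (Fin B)) (v : ((b : Fin B) × Fin (d b)) → ℝ) :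
    n21 ω (rs S v) ≤ n21 ω v := by
  rw [n21_rs]
  exact sum_le_sum_of_subset_of_nonneg (subset_univ _)
    fun b _ _ => mul_nonneg (hω b) (bn_nonneg v b)

lemma n21_rs_le_sqrt_wCard_mul_l2 (S : Finset (Fin B)) (v : ((b : Fin B) × Fin (d b)) → ℝ) :
    n21 ω (rs S v) ≤ √(wCard ω S) * l2 (rs S v) := by
  rw [n21_rs, ← Real.sqrt_sq (l2_nonneg _), l2_rs_sq]
  exact Real.sum_mul_le_sqrt_mul_sqrt S ω (bn v)

lemma exists_wCard_le_and_sqrt_mul_l2_rs_compl_le (hω : ∀ b, 0 < ω b) {s : ℝ} (hs : 0 ≤ s)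
    (v : ((b : Fin B) × Fin (d b)) → ℝ) :
    ∃ S : Finset (Fin B), wCard ω S ≤ s ∧ √s * l2 (rs Sᶜ v) ≤ n21 ω v := by
  obtain ⟨S, hS, hSc⟩ := exists_sum_sq_le_and_mul_sum_sq_compl_le hω (bn_nonneg v) hs
  refine ⟨S, hS, ?_⟩
  rw [← Real.sqrt_sq (l2_nonneg _), ← Real.sqrt_mul hs, l2_rs_sq,
    ← Real.sqrt_sq (n21_nonneg (fun b => (hω b).le) v)]
  exact Real.sqrt_le_sqrt hSc

noncomputable def blockSupport (z : ((b : Fin B) × Fin (d b)) → ℝ) : Finset (Fin B) :=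
  univ.filter fun b => bn z b ≠ 0

lemma wCard_blockSupport (z : ((b : Fin B) × Fin (d b)) → ℝ) :
    wCard ω (blockSupport z) = wspar ω z := by
  rw [wCard, wspar, blockSupport, sum_filter]
  exact sum_congr rfl fun b _ => by by_cases h : bn z b = 0 <;> simp [h]

lemma n21_rs_compl_blockSupport_le (hω : ∀ b, 0 ≤ ω b) (x z : ((b : Fin B) × Fin (d b)) → ℝ) :
    n21 ω (rs (blockSupport z)ᶜ x) ≤ n21 ω (x - z) := by
  refine le_trans ?_ (n21_rs_le hω (blockSupport z)ᶜ (x - z))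
  rw [n21_rs, n21_rs]
  refine sum_le_sum fun b hb => mul_le_mul_of_nonneg_left ?_ (hω b)
  have hzb : bn z b = 0 := by simpa [blockSupport] using hb
  simpa [hzb] using bn_add_le (x - z) z b

lemma n21_rs_compl_sub_le (hω : ∀ b, 0 ≤ ω b) {x xh : ((b : Fin B) × Fin (d b)) → ℝ}
    (hmin : n21 ω xh ≤ n21 ω x) (S : Finset (Fin B)) :
    n21 ω (rs Sᶜ (x - xh)) ≤ n21 ω (rs S (x - xh)) + 2 * n21 ω (rs Sᶜ x) := by
  have hx := n21_eq_n21_rs_add_n21_rs_compl (ω := ω) S x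
  have hxh := n21_eq_n21_rs_add_n21_rs_compl (ω := ω) S xh
  have hS : n21 ω (rs S x) ≤ n21 ω (rs S xh) + n21 ω (rs S (x - xh)) := by
    simpa [rs_sub] using n21_add_le hω (rs S xh) (rs S (x - xh))
  have hSc : n21 ω (rs Sᶜ (x - xh)) ≤ n21 ω (rs Sᶜ x) + n21 ω (rs Sᶜ xh) := by
    rw [rs_sub, sub_eq_add_neg, ← n21_neg (rs Sᶜ xh)]
    exact n21_add_le hω _ _
  linarith

lemma sigmaS_nonneg (hω : ∀ b, 0 ≤ ω b) (s : ℝ) (x : ((b : Fin B) × Fin (d b)) → ℝ) :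
    0 ≤ sigmaS ω s x :=
  Real.sInf_nonneg (by rintro t ⟨z, _, rfl⟩; exact n21_nonneg hω _)

lemma le_sigmaS {s a : ℝ} (hs : 0 ≤ s) {x : ((b : Fin B) × Fin (d b)) → ℝ}
    (h : ∀ z, wspar ω z ≤ s → a ≤ n21 ω (x - z)) : a ≤ sigmaS ω s x :=
  le_csInf ⟨_, 0, by simpa [wspar, bn] using hs, rfl⟩ (by rintro t ⟨z, hz, rfl⟩; exact h z hz)

end Blocks

section NullSpaceProperty

variable {m : ℕ} {A : Matrix (Fin m) ((b : Fin B) × Fin (d b)) ℝ} {ω : Fin B → ℝ} {s ρ τ : ℝ}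

def BlockL2RobustNSP (A : Matrix (Fin m) ((b : Fin B) × Fin (d b)) ℝ) (ω : Fin B → ℝ)
    (s ρ τ : ℝ) : Prop :=
  ∀ (v : ((b : Fin B) × Fin (d b)) → ℝ) (S : Finset (Fin B)), wCard ω S ≤ s →
    l2 (rs S v) ≤ ρ / √s * n21 ω (rs Sᶜ v) + τ * l2 (A.mulVec v)

def BlockL1RobustNSP (A : Matrix (Fin m) ((b : Fin B) × Fin (d b)) ℝ) (ω : Fin B → ℝ)
    (s ρ τ : ℝ) : Prop :=
  ∀ (v : ((b : Fin B) × Fin (d b)) → ℝ) (S : Finset (Fin B)), wCard ω S ≤ s →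
    n21 ω (rs S v) ≤ ρ * n21 ω (rs Sᶜ v) + τ * l2 (A.mulVec v)

lemma BlockL2RobustNSP.blockL1RobustNSP (h : BlockL2RobustNSP A ω s ρ τ) (hs : 0 < s) :
    BlockL1RobustNSP A ω s ρ (τ * √s) := by
  intro v S hS
  calc n21 ω (rs S v) ≤ √(wCard ω S) * l2 (rs S v) := n21_rs_le_sqrt_wCard_mul_l2 S v
    _ ≤ √s * l2 (rs S v) := by gcongr; exact l2_nonneg _
    _ ≤ √s * (ρ / √s * n21 ω (rs Sᶜ v) + τ * l2 (A.mulVec v)) := by gcongr; exact h v S hS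
    _ = ρ * n21 ω (rs Sᶜ v) + τ * √s * l2 (A.mulVec v) := by field_simp

lemma BlockL2RobustNSP.sqrt_mul_l2_le (h : BlockL2RobustNSP A ω s ρ τ) (hω : ∀ b, 0 < ω b)
    (hρ : 0 ≤ ρ) (hs : 0 < s) (v : ((b : Fin B) × Fin (d b)) → ℝ) :
    √s * l2 v ≤ (1 + ρ) * n21 ω v + τ * √s * l2 (A.mulVec v) := by
  obtain ⟨S, hS, hSc⟩ := exists_wCard_le_and_sqrt_mul_l2_rs_compl_le hω hs.le v
  have hSv : √s * l2 (rs S v) ≤ ρ * n21 ω v + τ * √s * l2 (A.mulVec v) :=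
    calc √s * l2 (rs S v) ≤ √s * (ρ / √s * n21 ω (rs Sᶜ v) + τ * l2 (A.mulVec v)) := by
          gcongr; exact h v S hS
      _ = ρ * n21 ω (rs Sᶜ v) + τ * √s * l2 (A.mulVec v) := by field_simp
      _ ≤ ρ * n21 ω v + τ * √s * l2 (A.mulVec v) := by
          gcongr; exact n21_rs_le (fun b => (hω b).le) Sᶜ v
  calc √s * l2 v ≤ √s * l2 (rs S v) + √s * l2 (rs Sᶜ v) := by
        rw [← mul_add]; gcongr; exact l2_le_l2_rs_add_l2_rs_compl S v
    _ ≤ (1 + ρ) * n21 ω v + τ * √s * l2 (A.mulVec v) := by linarith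

lemma BlockL1RobustNSP.one_sub_mul_n21_sub_le (h : BlockL1RobustNSP A ω s ρ τ)
    (hω : ∀ b, 0 ≤ ω b) (hρ0 : 0 ≤ ρ) (hρ1 : ρ ≤ 1) {x xh : ((b : Fin B) × Fin (d b)) → ℝ}
    (hmin : n21 ω xh ≤ n21 ω x) {S : Finset (Fin B)} (hS : wCard ω S ≤ s) :
    (1 - ρ) * n21 ω (x - xh)
      ≤ 2 * (1 + ρ) * n21 ω (rs Sᶜ x) + 2 * τ * l2 (A.mulVec (x - xh)) := by
  have hcone := n21_rs_compl_sub_le hω hmin S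
  have hnsp := h (x - xh) S hS
  have hsplit := n21_eq_n21_rs_add_n21_rs_compl (ω := ω) S (x - xh)
  have htail : (1 - ρ) * n21 ω (rs Sᶜ (x - xh))
      ≤ τ * l2 (A.mulVec (x - xh)) + 2 * n21 ω (rs Sᶜ x) := by linarith
  have hfull : n21 ω (x - xh)
      ≤ (1 + ρ) * n21 ω (rs Sᶜ (x - xh)) + τ * l2 (A.mulVec (x - xh)) := by linarith
  linarith [mul_le_mul_of_nonneg_left htail (by linarith : (0 : ℝ) ≤ 1 + ρ),
    mul_le_mul_of_nonneg_left hfull (sub_nonneg.mpr hρ1)]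

lemma BlockL1RobustNSP.one_sub_mul_n21_sub_le_sigmaS (h : BlockL1RobustNSP A ω s ρ τ)
    (hω : ∀ b, 0 ≤ ω b) (hρ0 : 0 ≤ ρ) (hρ1 : ρ ≤ 1) (hs : 0 ≤ s)
    {x xh : ((b : Fin B) × Fin (d b)) → ℝ} (hmin : n21 ω xh ≤ n21 ω x) :
    (1 - ρ) * n21 ω (x - xh)
      ≤ 2 * (1 + ρ) * sigmaS ω s x + 2 * τ * l2 (A.mulVec (x - xh)) := by
  have hpos : 0 < 2 * (1 + ρ) := by linarith
  have hσ : ((1 - ρ) * n21 ω (x - xh) - 2 * τ * l2 (A.mulVec (x - xh))) / (2 * (1 + ρ))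
      ≤ sigmaS ω s x := by
    refine le_sigmaS hs fun z hz => ?_
    rw [div_le_iff₀ hpos]
    have := h.one_sub_mul_n21_sub_le hω hρ0 hρ1 hmin ((wCard_blockSupport z).trans_le hz)
    linarith [mul_le_mul_of_nonneg_left (n21_rs_compl_blockSupport_le hω x z) hpos.le]
  rw [div_le_iff₀ hpos] at hσ
  linarith

end NullSpaceProperty

lemma le_and_le_of_robust_estimates {n ℓ σ ρ τ r η : ℝ} (hρ0 : 0 ≤ ρ) (hρ1 : ρ < 1)
    (hτ : 0 ≤ τ) (hσ : 0 ≤ σ) (hη : 0 ≤ η) (hr : 0 < r)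
    (hn : (1 - ρ) * n ≤ 2 * (1 + ρ) * σ + 4 * τ * r * η)
    (hℓ : r * ℓ ≤ (1 + ρ) * n + 2 * τ * r * η) :
    n ≤ 2 * ((1 + ρ) ^ 2 / (1 - ρ)) * σ + 2 * (τ * (3 + ρ) / (1 - ρ)) * r * η ∧
    ℓ ≤ 2 * ((1 + ρ) ^ 2 / (1 - ρ)) * σ / r + 2 * (τ * (3 + ρ) / (1 - ρ)) * η := by
  have h1ρ : 0 < 1 - ρ := sub_pos.mpr hρ1
  constructor
  · refine le_of_mul_le_mul_left ?_ h1ρ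
    calc (1 - ρ) * n ≤ 2 * (1 + ρ) ^ 2 * σ + 2 * τ * (3 + ρ) * r * η := by
          nlinarith [mul_nonneg (mul_nonneg hρ0 (by linarith : 0 ≤ 1 + ρ)) hσ,
            mul_nonneg (mul_nonneg (mul_nonneg (by linarith : 0 ≤ 1 + ρ) hτ) hr.le) hη]
      _ = _ := by field_simp
  · refine le_of_mul_le_mul_left ?_ (mul_pos h1ρ hr)
    calc (1 - ρ) * r * ℓ ≤ 2 * (1 + ρ) ^ 2 * σ + 2 * τ * (3 + ρ) * r * η := by
          nlinarith [mul_le_mul_of_nonneg_left hℓ h1ρ.le,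
            mul_le_mul_of_nonneg_left hn (by linarith : 0 ≤ 1 + ρ)]
      _ = _ := by field_simp

theorem stmt5 {m : ℕ} (A : Matrix (Fin m) ((b : Fin B) × Fin (d b)) ℝ)
    (ω : Fin B → ℝ) (hω : ∀ b, 1 ≤ ω b) (s ρ τ : ℝ)
    (hρ0 : 0 < ρ) (hρ1 : ρ < 1) (hτ : 0 < τ)
    (hs : ∀ b, ω b ^ 2 ≤ s)
    (hNSP : ∀ (v : ((b : Fin B) × Fin (d b)) → ℝ) (S : Finset (Fin B)), wCard ω S ≤ s →
      l2 (rs S v) ≤ ρ / Real.sqrt s * n21 ω (rs Sᶜ v) + τ * l2 (A.mulVec v))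
    (x : ((b : Fin B) × Fin (d b)) → ℝ) (e : Fin m → ℝ) (η : ℝ) (he : l2 e ≤ η)
    (xh : ((b : Fin B) × Fin (d b)) → ℝ)
    (hfeas : l2 (A.mulVec xh - (A.mulVec x + e)) ≤ η)
    (hmin : ∀ z, l2 (A.mulVec z - (A.mulVec x + e)) ≤ η → n21 ω xh ≤ n21 ω z) :
    n21 ω (x - xh) ≤
        2 * ((1 + ρ) ^ 2 / (1 - ρ)) * sigmaS ω s x
          + 2 * (τ * (3 + ρ) / (1 - ρ)) * Real.sqrt s * η ∧
    l2 (x - xh) ≤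
        2 * ((1 + ρ) ^ 2 / (1 - ρ)) * sigmaS ω s x / Real.sqrt s
          + 2 * (τ * (3 + ρ) / (1 - ρ)) * η := by
  have hω0 : ∀ b, 0 < ω b := fun b => by linarith [hω b]
  have hη : 0 ≤ η := (l2_nonneg e).trans he
  have hσ := sigmaS_nonneg (fun b => (hω0 b).le) s x
  rcases isEmpty_or_nonempty (Fin B) with _ | ⟨⟨b₀⟩⟩
  · have h1ρ : 0 < 1 - ρ := sub_pos.mpr hρ1
    simp only [n21, l2, univ_eq_empty, sum_empty, Real.sqrt_zero]
    constructor <;> positivity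
  have hs0 : 0 < s := by nlinarith [hω b₀, hs b₀]
  have hAv := mul_le_mul_of_nonneg_left (l2_mulVec_sub_le_two_mul A he hfeas)
    (by positivity : 0 ≤ τ * √s)
  have hxmin : n21 ω xh ≤ n21 ω x := hmin x (by rwa [sub_add_cancel_left, l2_neg])
  have hl1 := (BlockL2RobustNSP.blockL1RobustNSP hNSP hs0).one_sub_mul_n21_sub_le_sigmaS
    (fun b => (hω0 b).le) hρ0.le hρ1.le hs0.le hxmin
  have hl2 := BlockL2RobustNSP.sqrt_mul_l2_le hNSP hω0 hρ0.le hs0 (x - xh)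
  exact le_and_le_of_robust_estimates hρ0.le hρ1 hτ.le hσ hη (Real.sqrt_pos.mpr hs0)
    (by linarith) (by linarith)
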